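/- arXiv:math/0510300 — 3 statements merged into one kernel-verified Lean document; each statement's English description precedes it below -/
import Mathlib

section
/- (Reduction Theorem, upper block.) Let c₁₄₇, c₂₃₇, c₅₆₇ be real numbers and set K = c₁₄₇·e₁e₄ + c₂₃₇·e₂e₃ + c₅₆₇·e₅e₆ (an 8×8 real matrix). Suppose ψ = (a,b,c,d,0,0,0,0) ∈ ℝ⁸ is nonzero and satisfies K·ψ = 0. Then either (c₅₆₇ = 0 and c₁₄₇ = −c₂₃₇), or there exists ε ∈ {1,−1} such that c₁₄₇ = −c₂₃₇ + ε·c₅₆₇ and (c,d) = (−ε·a, ε·b). -/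
open Matrix

noncomputable section

/-- `E8 i j` is the 8×8 skew-symmetric matrix sending the `i`-th basis
vector to the `j`-th, the `j`-th to minus the `i`-th, and all others to 0. -/
def E8 (i j : Fin 8) : Matrix (Fin 8) (Fin 8) ℝ :=
  Matrix.single j i 1 - Matrix.single i j 1

/-- The matrices `e₁,…,e₇` of the 7-dimensional spin representation on ℝ⁸
(indices shifted to be 0-based). -/
def g : Fin 7 → Matrix (Fin 8) (Fin 8) ℝ :=
  ![E8 0 7 + E8 1 6 - E8 2 5 - E8 3 4,
    -E8 0 6 + E8 1 7 + E8 2 4 - E8 3 5,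
    -E8 0 5 + E8 1 4 - E8 2 7 + E8 3 6,
    -E8 0 4 - E8 1 5 - E8 2 6 - E8 3 7,
    -E8 0 2 - E8 1 3 + E8 4 6 + E8 5 7,
    E8 0 3 - E8 1 2 - E8 4 7 + E8 5 6,
    E8 0 1 - E8 2 3 - E8 4 5 + E8 6 7]

/-- 7×7 version of `E_{ij}`. -/
def E7 (i j : Fin 7) : Matrix (Fin 7) (Fin 7) ℝ :=
  Matrix.single j i 1 - Matrix.single i j 1

/-- The spin lift `σ(A) = (1/2) Σ_{p<q} a_{pq} e_p e_q` of a skew-symmetric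
7×7 matrix `A = Σ_{p<q} a_{pq} E_{pq}` (so that `a_{pq} = A q p` for `p < q`). -/
def spinLift (A : Matrix (Fin 7) (Fin 7) ℝ) : Matrix (Fin 8) (Fin 8) ℝ :=
  (1/2 : ℝ) • ∑ p : Fin 7, ∑ q : Fin 7, if p < q then A q p • (g p * g q) else 0

/-- Clifford action of the interior product `e_i ⌟ e_{abc}` (for `a<b<c`). -/
def contr (i a b c : Fin 7) : Matrix (Fin 8) (Fin 8) ℝ :=
  (if i = a then g b * g c else 0) - (if i = b then g a * g c else 0) +
    (if i = c then g a * g b else 0)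

/-- The ordered index triples (0-based) of the eleven basis 3-forms spanning `Λ³₁₁`:
`e₁₂₅, e₁₃₆, e₂₄₆, e₃₄₅, e₁₂₆, e₃₄₆, e₁₃₅, e₂₄₅, e₁₄₇, e₅₆₇, e₂₃₇`. -/
def tri : Fin 11 → Fin 7 × Fin 7 × Fin 7 :=
  ![(0,1,4),(0,2,5),(1,3,5),(2,3,4),(0,1,5),(2,3,5),(0,2,4),(1,3,4),(0,3,6),(4,5,6),(1,2,6)]

/-- For `T = Σ_k c_k e_{tri k} ∈ Λ³₁₁`, the Clifford action `Cl(e_i ⌟ T)`. -/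
def clContr (c : Fin 11 → ℝ) (i : Fin 7) : Matrix (Fin 8) (Fin 8) ℝ :=
  ∑ k : Fin 11, c k • contr i (tri k).1 (tri k).2.1 (tri k).2.2

/-- `ψ` is `∇ᵀ`-parallel for connection matrices `A` and torsion `T ∈ Λ³₁₁`
with coefficient vector `c`. -/
def IsParallel (A : Fin 7 → Matrix (Fin 7) (Fin 7) ℝ) (c : Fin 11 → ℝ)
    (ψ : Fin 8 → ℝ) : Prop :=
  ∀ i : Fin 7, (spinLift (A i)).mulVec ψ + (clContr c i).mulVec ψ = 0

section SymmetricSystem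

variable {R : Type*} [CommRing R] [NoZeroDivisors R] {s t x y : R}

theorem sq_eq_sq_of_symmetric_system (h₁ : t * x + s * y = 0) (h₂ : s * x + t * y = 0)
    (hxy : x ≠ 0 ∨ y ≠ 0) : s ^ 2 = t ^ 2 := by
  have hx : (t ^ 2 - s ^ 2) * x = 0 := by linear_combination t * h₁ - s * h₂
  have hy : (t ^ 2 - s ^ 2) * y = 0 := by linear_combination t * h₂ - s * h₁
  have hdet : t ^ 2 - s ^ 2 = 0 := by
    rcases hxy with hx0 | hy0
    · exact (mul_eq_zero.mp hx).resolve_right hx0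
    · exact (mul_eq_zero.mp hy).resolve_right hy0
  exact (sub_eq_zero.mp hdet).symm

theorem eq_neg_mul_of_symmetric_system {ε : R} (hε : ε = 1 ∨ ε = -1) (ht : t ≠ 0)
    (hs : s = ε * t) (h₁ : t * x + s * y = 0) : y = -ε * x := by
  have hε2 : ε * ε = 1 := by rcases hε with rfl | rfl <;> ring
  have hxy : x + ε * y = 0 :=
    (mul_eq_zero.mp (by linear_combination h₁ - y * hs : t * (x + ε * y) = 0)).resolve_left ht
  linear_combination ε * hxy - y * hε2

end SymmetricSystem

theorem torsion_mulVec_upper (c147 c237 c567 a b c d : ℝ) :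
    (c147 • (g 0 * g 3) + c237 • (g 1 * g 2) + c567 • (g 4 * g 5)).mulVec
        ![a, b, c, d, 0, 0, 0, 0] =
      ![(c147 + c237) * d - c567 * b, c567 * a + (c147 + c237) * c,
        c567 * d - (c147 + c237) * b, -((c147 + c237) * a + c567 * c), 0, 0, 0, 0] := by
  ext i
  fin_cases i <;>
    simp [g, E8, Matrix.mulVec, dotProduct, Fin.sum_univ_succ, Matrix.mul_apply, Matrix.single] <;>
    ring

/-- `K` acts on the pairs `(a, c)` and `(b, -d)` by the same matrix `!![t, s; s, t]`,
with `s = c147 + c237` and `t = c567`. -/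
theorem torsion_mulVec_upper_eq_zero_iff (c147 c237 c567 a b c d : ℝ) :
    (c147 • (g 0 * g 3) + c237 • (g 1 * g 2) + c567 • (g 4 * g 5)).mulVec
        ![a, b, c, d, 0, 0, 0, 0] = 0 ↔
      (c567 * a + (c147 + c237) * c = 0 ∧ (c147 + c237) * a + c567 * c = 0) ∧
        (c567 * b + (c147 + c237) * -d = 0 ∧ (c147 + c237) * b + c567 * -d = 0) := by
  rw [torsion_mulVec_upper]
  simp only [funext_iff, Fin.forall_fin_succ, Pi.zero_apply, Fin.isValue, cons_val_zero,
    cons_val_succ, cons_val_fin_one, neg_add_rev, mul_neg, implies_true, and_self, and_true]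
  constructor
  · rintro ⟨h0, h1, h2, h3⟩
    refine ⟨⟨?_, ?_⟩, ?_, ?_⟩ <;> linarith
  · rintro ⟨⟨h0, h1⟩, h2, h3⟩
    refine ⟨?_, ?_, ?_, ?_⟩ <;> linarith

/-- Reduction Theorem, upper block. -/
theorem stmt1 (c147 c237 c567 a b c d : ℝ)
    (ψ : Fin 8 → ℝ) (hψ : ψ = ![a, b, c, d, 0, 0, 0, 0]) (hne : ψ ≠ 0)
    (h : (c147 • (g 0 * g 3) + c237 • (g 1 * g 2) + c567 • (g 4 * g 5)).mulVec ψ = 0) :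
    (c567 = 0 ∧ c147 = -c237) ∨
    ∃ eps : ℝ, (eps = 1 ∨ eps = -1) ∧ c147 = -c237 + eps * c567 ∧
      c = -eps * a ∧ d = eps * b := by
  subst hψ
  obtain ⟨⟨hac, hac'⟩, hbd, hbd'⟩ := (torsion_mulVec_upper_eq_zero_iff ..).mp h
  have hsq : (c147 + c237) ^ 2 = c567 ^ 2 := by
    have hpair : (a ≠ 0 ∨ c ≠ 0) ∨ (b ≠ 0 ∨ -d ≠ 0) := by
      by_contra! h0
      exact hne (by simp [h0.1.1, h0.1.2, h0.2.1, neg_eq_zero.mp h0.2.2])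
    rcases hpair with hpair | hpair
    · exact sq_eq_sq_of_symmetric_system hac hac' hpair
    · exact sq_eq_sq_of_symmetric_system hbd hbd' hpair
  by_cases ht : c567 = 0
  · subst ht
    exact Or.inl ⟨rfl, by linear_combination (by simpa using hsq : c147 + c237 = 0)⟩
  · obtain ⟨eps, heps, hs⟩ : ∃ eps : ℝ, (eps = 1 ∨ eps = -1) ∧ c147 + c237 = eps * c567 := by
      rcases sq_eq_sq_iff_eq_or_eq_neg.mp hsq with hs | hs
      · exact ⟨1, Or.inl rfl, by rw [hs, one_mul]⟩
      · exact ⟨-1, Or.inr rfl, by rw [hs, neg_one_mul]⟩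
    have hd := eq_neg_mul_of_symmetric_system heps ht hs hbd
    exact Or.inr ⟨eps, heps, by linear_combination hs,
      eq_neg_mul_of_symmetric_system heps ht hs hac, by linear_combination -hd⟩
end
end

section
/- (Reduction Theorem, lower block.) Let c₁₄₇, c₂₃₇, c₅₆₇ be real numbers and set K = c₁₄₇·e₁e₄ + c₂₃₇·e₂e₃ + c₅₆₇·e₅e₆ (an 8×8 real matrix). Suppose ψ = (0,0,0,0,e,f,g,h) ∈ ℝ⁸ is nonzero and satisfies K·ψ = 0. Then either (c₅₆₇ = 0 and c₁₄₇ = c₂₃₇), or there exists ε ∈ {1,−1} such that c₁₄₇ = c₂₃₇ + ε·c₅₆₇ and (g,h) = (ε·e, −ε·f). -/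
open Matrix

noncomputable section

/-!
On spinors supported in the lower block, `K` acts through `d = c₁₄₇ - c₂₃₇` and `c = c₅₆₇` as
two symmetric `2 × 2` blocks, `[[d, -c], [-c, d]]` on `(e, g)` and `[[d, c], [c, d]]` on `(f, h)`.
Their eigenvectors are `e ± g` and `f ± h`, with eigenvalues `d ∓ c` and `d ± c`. A nonzero
kernel vector therefore forces `d = ε c` for a sign `ε`; when `c ≠ 0` only one of `d ± c`
vanishes, which kills the complementary combinations and gives `g = ε e`, `h = -ε f`.
-/

theorem mulVec_lowerSpinor (a b c ee ff gg hh : ℝ) :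
    (a • (g 0 * g 3) + b • (g 1 * g 2) + c • (g 4 * g 5)).mulVec ![0, 0, 0, 0, ee, ff, gg, hh] =
      ![0, 0, 0, 0, -((a - b) * hh + c * ff), c * ee - (a - b) * gg,
        (a - b) * ff + c * hh, (a - b) * ee - c * gg] := by
  ext i
  fin_cases i <;>
    simp [g, E8, single, mulVec, dotProduct, Matrix.mul_apply, Fin.sum_univ_eight,
      sub_eq_add_neg] <;>
    ring

theorem sign_cases_of_eigen_eqs {d c ee ff gg hh : ℝ}
    (hne : ¬(ee = 0 ∧ ff = 0 ∧ gg = 0 ∧ hh = 0))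
    (heg : (d - c) * (ee + gg) = 0) (heg' : (d + c) * (ee - gg) = 0)
    (hfh : (d + c) * (ff + hh) = 0) (hfh' : (d - c) * (ff - hh) = 0) :
    (c = 0 ∧ d = 0) ∨ ∃ eps : ℝ, (eps = 1 ∨ eps = -1) ∧ d = eps * c ∧
      gg = eps * ee ∧ hh = -eps * ff := by
  by_cases hc : c = 0
  · subst hc
    refine .inl ⟨rfl, ?_⟩
    by_contra hd
    have hsum : ee + gg = 0 := by simpa [hd] using heg
    have hdiff : ee - gg = 0 := by simpa [hd] using heg'
    have hsum' : ff + hh = 0 := by simpa [hd] using hfh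
    have hdiff' : ff - hh = 0 := by simpa [hd] using hfh'
    exact hne ⟨by linarith, by linarith, by linarith, by linarith⟩
  right
  by_cases hplus : d = c
  · have hdc : d + c ≠ 0 := by rw [hplus]; intro h; exact hc (by linarith)
    have heg₀ := (mul_eq_zero.mp heg').resolve_left hdc
    have hfh₀ := (mul_eq_zero.mp hfh).resolve_left hdc
    exact ⟨1, .inl rfl, by linarith, by linarith, by linarith⟩
  by_cases hminus : d = -c
  · have hdc : d - c ≠ 0 := by rw [hminus]; intro h; exact hc (by linarith)
    have heg₀ := (mul_eq_zero.mp heg).resolve_left hdc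
    have hfh₀ := (mul_eq_zero.mp hfh').resolve_left hdc
    exact ⟨-1, .inr rfl, by linarith, by linarith, by linarith⟩
  have hsub : d - c ≠ 0 := sub_ne_zero.mpr hplus
  have hadd : d + c ≠ 0 := fun h => hminus (eq_neg_of_add_eq_zero_left h)
  have hsum := (mul_eq_zero.mp heg).resolve_left hsub
  have hdiff := (mul_eq_zero.mp heg').resolve_left hadd
  have hsum' := (mul_eq_zero.mp hfh).resolve_left hadd
  have hdiff' := (mul_eq_zero.mp hfh').resolve_left hsub
  exact absurd ⟨by linarith, by linarith, by linarith, by linarith⟩ hne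

/-- Reduction Theorem, lower block. -/
theorem stmt2 (c147 c237 c567 ee ff gg hh : ℝ)
    (ψ : Fin 8 → ℝ) (hψ : ψ = ![0, 0, 0, 0, ee, ff, gg, hh]) (hne : ψ ≠ 0)
    (h : (c147 • (g 0 * g 3) + c237 • (g 1 * g 2) + c567 • (g 4 * g 5)).mulVec ψ = 0) :
    (c567 = 0 ∧ c147 = c237) ∨
    ∃ eps : ℝ, (eps = 1 ∨ eps = -1) ∧ c147 = c237 + eps * c567 ∧
      gg = eps * ee ∧ hh = -eps * ff := by
  subst hψ
  rw [mulVec_lowerSpinor] at h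
  have h4 := congrFun h 4
  have h5 := congrFun h 5
  have h6 := congrFun h 6
  have h7 := congrFun h 7
  simp only [Matrix.cons_val, Pi.zero_apply] at h4 h5 h6 h7
  have hψ₀ : ¬(ee = 0 ∧ ff = 0 ∧ gg = 0 ∧ hh = 0) := by
    rintro ⟨rfl, rfl, rfl, rfl⟩
    exact hne (by simp)
  rcases sign_cases_of_eigen_eqs (d := c147 - c237) (c := c567) hψ₀
      (by linear_combination h7 - h5) (by linear_combination h7 + h5)
      (by linear_combination h6 - h4) (by linear_combination h6 + h4) with
    ⟨hc, hd⟩ | ⟨eps, heps, hd, hgg, hhh⟩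
  · exact .inl ⟨hc, by linarith⟩
  · exact .inr ⟨eps, heps, by linarith, hgg, hhh⟩
end
end

section
/- For every real t > 0 and every (r,s) ∈ ℝ² with (r,s) ≠ (0,0), the spinor ψ_{r,s} = (0,0,0,0,r,s,−r,s) ∈ ℝ⁸ is ∇ᵀ-parallel for the torsion form T_{r,s}; that is, σ(A_i)·ψ_{r,s} + Cl(e_i ⌟ T_{r,s})·ψ_{r,s} = 0 for every i = 1,…,7, where A₁,…,A₇ are the connection matrices of example (2). -/
open Matrix

noncomputable section

/-- Connection matrices of example (2). -/
def Aex2 (t : ℝ) : Fin 7 → Matrix (Fin 7) (Fin 7) ℝ :=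
  ![(-t) • ((2:ℝ) • E7 0 6 + E7 2 4 - E7 1 5),
    (-t) • (E7 0 5 + (2:ℝ) • E7 1 6 + E7 3 4),
    (-t) • (E7 0 4 - E7 2 6),
    (-t) • (E7 1 4 - E7 3 6),
    (-t) • (E7 0 2 + E7 1 3 + (2:ℝ) • E7 4 6),
    (-t) • (E7 0 1 - E7 5 6),
    0]

/-- Coefficient vector of `η⁺ = e₁₂₅+e₁₃₆+e₂₄₆−e₃₄₅`. -/
def etaP : Fin 11 → ℝ := ![1,1,1,-1,0,0,0,0,0,0,0]

/-- Coefficient vector of `η⁻ = e₁₂₆−e₁₃₅−e₂₄₅−e₃₄₆`. -/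
def etaM : Fin 11 → ℝ := ![0,0,0,0,1,-1,-1,-1,0,0,0]

/-- Coefficient vector of the `k`-th basis 3-form of `Λ³₁₁`. -/
def bv (k : Fin 11) : Fin 11 → ℝ := Pi.single k 1

/-- Coefficient vector of the torsion form `T_{r,s}`. -/
def Trs (t r s : ℝ) : Fin 11 → ℝ :=
  (-(t/2)) • (((r^2 - s^2)/(2*(r^2 + s^2))) • (etaP - (6:ℝ) • bv 0)
    + ((r - s)^2/(r^2 + s^2)) • (etaM + (3:ℝ) • bv 5))

/-! Both `σ` and `c ↦ Cl(e_i ⌟ c)` are linear, and `A_i` and `T_{r,s}` are homogeneous of degree one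
in `t`, so it suffices to treat `t = 1`. There `σ(A_i)` and `Cl(e_i ⌟ T_{r,s})` are explicit
combinations of the products `e_p e_q`, whose action on `ℝ⁸` is read off from that of the `e_p`;
after clearing the denominator `r² + s²`, each coordinate of each equation is a polynomial identity
in `r` and `s`. -/

lemma spinLift_add (A B : Matrix (Fin 7) (Fin 7) ℝ) :
    spinLift (A + B) = spinLift A + spinLift B := by
  simp only [spinLift, Matrix.add_apply, add_smul, ← smul_add, ← Finset.sum_add_distrib,
    ite_add_ite, add_zero]

lemma spinLift_sub (A B : Matrix (Fin 7) (Fin 7) ℝ) :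
    spinLift (A - B) = spinLift A - spinLift B := by
  simp only [spinLift, Matrix.sub_apply, sub_smul, ← smul_sub, ← Finset.sum_sub_distrib,
    ite_sub_ite, sub_zero]

lemma spinLift_smul (a : ℝ) (A : Matrix (Fin 7) (Fin 7) ℝ) :
    spinLift (a • A) = a • spinLift A := by
  rw [spinLift, spinLift, smul_comm a]
  congr 1
  simp only [Finset.smul_sum, smul_ite, smul_zero, Matrix.smul_apply, smul_eq_mul, mul_smul]

lemma spinLift_zero : spinLift 0 = 0 := by
  simp [spinLift]

lemma spinLift_E7 {p q : Fin 7} (hpq : p < q) :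
    spinLift (E7 p q) = (1 / 2 : ℝ) • (g p * g q) := by
  rw [spinLift]
  congr 1
  rw [Finset.sum_eq_single p, Finset.sum_eq_single q]
  · simp [E7, hpq, hpq.ne]
  · intro q' _ hq'
    simp +contextual [E7, hq'.symm]
  · simp
  · intro p' _ hp'
    refine Finset.sum_eq_zero fun q' _ => ?_
    simp only [E7, Matrix.sub_apply, Matrix.single_apply]
    split_ifs <;> simp <;> grind
  · simp

lemma clContr_add (c d : Fin 11 → ℝ) (i : Fin 7) :
    clContr (c + d) i = clContr c i + clContr d i := by
  simp only [clContr, Pi.add_apply, add_smul, Finset.sum_add_distrib]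

lemma clContr_smul (a : ℝ) (c : Fin 11 → ℝ) (i : Fin 7) :
    clContr (a • c) i = a • clContr c i := by
  simp only [clContr, Pi.smul_apply, smul_eq_mul, mul_smul, Finset.smul_sum]

lemma IsParallel.smul {A : Fin 7 → Matrix (Fin 7) (Fin 7) ℝ} {c : Fin 11 → ℝ} {ψ : Fin 8 → ℝ}
    (h : IsParallel A c ψ) (a : ℝ) : IsParallel (a • A) (a • c) ψ := by
  intro i
  rw [Pi.smul_apply, spinLift_smul, clContr_smul, smul_mulVec, smul_mulVec, ← smul_add, h i,
    smul_zero]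

lemma Aex2_eq_smul (t : ℝ) : Aex2 t = t • Aex2 1 := by
  ext i : 1
  fin_cases i <;> simp [Aex2] <;> module

lemma Trs_eq_smul (t r s : ℝ) : Trs t r s = t • Trs 1 r s := by
  simp only [Trs, smul_smul]
  ring_nf

lemma g0_mulVec (v : Fin 8 → ℝ) : g 0 *ᵥ v = ![-v 7, -v 6, v 5, v 4, -v 3, -v 2, v 1, v 0] := by
  ext j; fin_cases j <;> simp [g, E8, mulVec, dotProduct, single]

lemma g1_mulVec (v : Fin 8 → ℝ) : g 1 *ᵥ v = ![v 6, -v 7, -v 4, v 5, v 2, -v 3, -v 0, v 1] := by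
  ext j; fin_cases j <;> simp [g, E8, mulVec, dotProduct, single]

lemma g2_mulVec (v : Fin 8 → ℝ) : g 2 *ᵥ v = ![v 5, -v 4, v 7, -v 6, v 1, -v 0, v 3, -v 2] := by
  ext j; fin_cases j <;> simp [g, E8, mulVec, dotProduct, single]

lemma g3_mulVec (v : Fin 8 → ℝ) : g 3 *ᵥ v = ![v 4, v 5, v 6, v 7, -v 0, -v 1, -v 2, -v 3] := by
  ext j; fin_cases j <;> simp [g, E8, mulVec, dotProduct, single]

lemma g4_mulVec (v : Fin 8 → ℝ) : g 4 *ᵥ v = ![v 2, v 3, -v 0, -v 1, -v 6, -v 7, v 4, v 5] := by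
  ext j; fin_cases j <;> simp [g, E8, mulVec, dotProduct, single]

lemma g5_mulVec (v : Fin 8 → ℝ) : g 5 *ᵥ v = ![-v 3, v 2, -v 1, v 0, v 7, -v 6, v 5, -v 4] := by
  ext j; fin_cases j <;> simp [g, E8, mulVec, dotProduct, single]

lemma g6_mulVec (v : Fin 8 → ℝ) : g 6 *ᵥ v = ![-v 1, v 0, v 3, -v 2, v 5, -v 4, -v 7, v 6] := by
  ext j; fin_cases j <;> simp [g, E8, mulVec, dotProduct, single]

set_option maxHeartbeats 800000 in
lemma isParallel_Aex2_one {r s : ℝ} (hN : r ^ 2 + s ^ 2 ≠ 0) :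
    IsParallel (Aex2 1) (Trs 1 r s) ![0, 0, 0, 0, r, s, -r, s] := by
  intro i
  simp only [Trs, clContr_add, clContr_smul]
  fin_cases i <;>
  simp (disch := decide) only [Aex2, Fin.zero_eta, Fin.mk_one, Fin.reduceFinMk, cons_val,
    spinLift_add, spinLift_sub, spinLift_smul, spinLift_zero, spinLift_E7] <;>
  simp +decide only [clContr, Fin.sum_univ_succ, Fin.sum_univ_zero, tri,
    contr, etaP, etaM, bv, cons_val, Fin.succ_zero_eq_one, Fin.succ_one_eq_two, Fin.reduceSucc,
    Pi.single_apply, Pi.smul_apply, Pi.sub_apply, smul_eq_mul, reduceIte] <;>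
  simp only [add_mulVec, sub_mulVec, smul_mulVec, zero_mulVec, ← mulVec_mulVec, g0_mulVec,
    g1_mulVec, g2_mulVec, g3_mulVec, g4_mulVec, g5_mulVec, g6_mulVec] <;>
  ext j <;> fin_cases j <;>
  simp only [Fin.zero_eta, Fin.mk_one, Fin.reduceFinMk, Pi.add_apply, Pi.smul_apply, Pi.sub_apply,
    Pi.zero_apply, cons_val, smul_eq_mul] <;>
  field_simp <;> ring

theorem stmt3_general (t : ℝ) (r s : ℝ) (hrs : (r, s) ≠ (0, 0)) :
    IsParallel (Aex2 t) (Trs t r s) ![0, 0, 0, 0, r, s, -r, s] := by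
  have hN : r ^ 2 + s ^ 2 ≠ 0 := by
    contrapose! hrs
    obtain ⟨hr, hs⟩ := (add_eq_zero_iff_of_nonneg (sq_nonneg r) (sq_nonneg s)).mp hrs
    simp_all
  rw [Aex2_eq_smul, Trs_eq_smul]
  exact (isParallel_Aex2_one hN).smul t

/-- the spinor `ψ_{r,s}` is `∇ᵀ`-parallel for `T_{r,s}`. -/
theorem stmt3 (t : ℝ) (ht : 0 < t) (r s : ℝ) (hrs : (r, s) ≠ (0, 0)) :
    IsParallel (Aex2 t) (Trs t r s) ![0, 0, 0, 0, r, s, -r, s] :=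
  stmt3_general t r s hrs
end
end
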